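/- arXiv:2308.08748 — 4 statements merged into one kernel-verified Lean document; each statement's English description precedes it below -/
import Mathlib

section
/- Let η* minimize J(η) = (1/2)‖Bη‖² + ⟨y₀, Φη⟩ − ⟨y_d, η⟩ + ε₀‖η‖ over a real Hilbert space H, where B, Φ are bounded linear and ε₀ > 0. Then for all η ∈ H: |⟨Bη*, Bη⟩ + ⟨y₀, Φη⟩ − ⟨y_d, η⟩| ≤ ε₀‖η‖. -/
open scoped RealInnerProductSpace

theorem stmt_5 {H K : Type*} [NormedAddCommGroup H] [InnerProductSpace ℝ H]
    [NormedAddCommGroup K] [InnerProductSpace ℝ K]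
    (B : H →L[ℝ] K) (Φ : H →L[ℝ] H)
    (y₀ yd : H) (ε₀ : ℝ) (hε₀ : 0 < ε₀)
    (J : H → ℝ)
    (hJ : ∀ η : H, J η = (1/2) * ‖B η‖^2 + ⟪y₀, Φ η⟫ - ⟪yd, η⟫ + ε₀ * ‖η‖)
    (ηstar : H) (hmin : ∀ η : H, J ηstar ≤ J η) :
    ∀ η : H, |⟪B ηstar, B η⟫ + ⟪y₀, Φ η⟫ - ⟪yd, η⟫| ≤ ε₀ * ‖η‖ := by
  intro η
  set L : ℝ := ⟪B ηstar, B η⟫ + ⟪y₀, Φ η⟫ - ⟪yd, η⟫ with hL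
  set C : ℝ := ‖B η‖^2 with hC
  have hC0 : 0 ≤ C := sq_nonneg _
  have key : ∀ t : ℝ, 0 ≤ t * L + t^2/2 * C + ε₀ * (|t| * ‖η‖) := by
    intro t
    have h1 := hmin (ηstar + t • η)
    rw [hJ, hJ] at h1
    have hBexp : ‖B (ηstar + t • η)‖^2
        = ‖B ηstar‖^2 + 2*t*⟪B ηstar, B η⟫ + t^2*‖B η‖^2 := by
      rw [map_add, map_smul]
      rw [norm_add_sq_real, real_inner_smul_right, norm_smul]
      simp [mul_pow, sq_abs, Real.norm_eq_abs]
      ring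
    have hΦexp : ⟪y₀, Φ (ηstar + t • η)⟫ = ⟪y₀, Φ ηstar⟫ + t * ⟪y₀, Φ η⟫ := by
      rw [map_add, map_smul]
      simp [inner_add_right, real_inner_smul_right]
    have hydexp : ⟪yd, ηstar + t • η⟫ = ⟪yd, ηstar⟫ + t * ⟪yd, η⟫ := by
      simp [inner_add_right, real_inner_smul_right]
    have hnorm : ‖ηstar + t • η‖ ≤ ‖ηstar‖ + |t| * ‖η‖ := by
      calc ‖ηstar + t • η‖ ≤ ‖ηstar‖ + ‖t • η‖ := norm_add_le _ _
        _ = ‖ηstar‖ + |t| * ‖η‖ := by rw [norm_smul, Real.norm_eq_abs]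
    rw [hBexp, hΦexp, hydexp] at h1
    nlinarith [h1, hnorm, hε₀.le]
  have half : ∀ L' : ℝ, (∀ t : ℝ, 0 ≤ t * L' + t^2/2 * C + ε₀ * (|t| * ‖η‖)) →
      L' ≤ ε₀ * ‖η‖ := by
    intro L' hk
    refine le_of_forall_pos_le_add fun ε hε => ?_
    have hs : 0 < 2*ε/(C+1) := by positivity
    have := hk (-(2*ε/(C+1)))
    set s := 2*ε/(C+1) with hsdef
    rw [abs_neg, abs_of_pos hs] at this
    -- 0 ≤ -s L' + s²/2 C + ε₀ s ‖η‖
    have hdiv : L' ≤ s/2 * C + ε₀ * ‖η‖ := by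
      have := mul_le_mul_of_nonneg_left (le_of_sub_nonneg (by nlinarith)) (le_of_lt (inv_pos.mpr hs))
      nlinarith [this, hs]
    have hsC : s/2 * C ≤ ε := by
      rw [hsdef]
      have heq : 2*ε/(C+1)/2*C = ε*C/(C+1) := by ring
      rw [heq, div_le_iff₀ (by positivity : (0:ℝ) < C+1)]
      nlinarith
    linarith
  have h1 : L ≤ ε₀ * ‖η‖ := half L key
  have h2 : -L ≤ ε₀ * ‖η‖ := by
    apply half (-L)
    intro t
    have := key (-t)
    rw [abs_neg] at this
    nlinarith [this]
  exact abs_le.mpr ⟨by linarith, h1⟩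
end

section
/- In the setting of the Euler–Lagrange equation ⟨Bη*, Bη⟩ + ⟨y₀, Φη⟩ − ⟨y_d, η⟩ + ε₀⟨η*, η⟩/‖η*‖ = 0 for all η, suppose additionally there is a bounded linear 'final state' map S with adjoint relation ⟨u, Bη⟩_K + ⟨y₀, Φη⟩ = ⟨S(u), η⟩ for all η ∈ H and u ∈ K (duality identity). Set u* = Bη*. Then ⟨S(u*) − y_d, η*⟩ = −ε₀‖η*‖, and consequently ‖S(u*) − y_d‖ ≥ ε₀, while also from the variational inequality ‖S(u*) − y_d‖ ≤ ε₀; hence ‖S(u*) − y_d‖ = ε₀. -/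
open scoped RealInnerProductSpace

private lemma aux_le (x k : ℝ) (h : ∀ s : ℝ, 0 < s → s < 1 → x ≤ s * k) : x ≤ 0 := by
  by_contra h'
  push_neg at h'
  rcases le_or_gt k 0 with hk | hk
  · have := h (1/2) (by norm_num) (by norm_num)
    nlinarith
  · have hs1 : (0:ℝ) < min (1/2) (x/(2*k)) := by
      apply lt_min (by norm_num)
      positivity
    have hs2 : min (1/2) (x/(2*k)) < 1 := lt_of_le_of_lt (min_le_left _ _) (by norm_num)
    have := h _ hs1 hs2
    have h3 : min (1/2) (x/(2*k)) * k ≤ (x/(2*k)) * k := by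
      apply mul_le_mul_of_nonneg_right (min_le_right _ _) hk.le
    have h4 : (x/(2*k)) * k = x/2 := by field_simp
    linarith

theorem stmt_7 {H K : Type*} [NormedAddCommGroup H] [InnerProductSpace ℝ H]
    [NormedAddCommGroup K] [InnerProductSpace ℝ K]
    (B : H →L[ℝ] K) (Φ : H →L[ℝ] H)
    (y₀ yd : H) (ε₀ : ℝ) (hε₀ : 0 < ε₀)
    (J : H → ℝ)
    (hJ : ∀ η : H, J η = (1/2) * ‖B η‖^2 + ⟪y₀, Φ η⟫ - ⟪yd, η⟫ + ε₀ * ‖η‖)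
    (ηstar : H) (hne : ηstar ≠ 0) (hmin : ∀ η : H, J ηstar ≤ J η)
    (S : K → H) (hS : ∀ (u : K) (η : H), ⟪u, B η⟫ + ⟪y₀, Φ η⟫ = ⟪S u, η⟫) :
    ⟪S (B ηstar) - yd, ηstar⟫ = -ε₀ * ‖ηstar‖ ∧ ‖S (B ηstar) - yd‖ = ε₀ := by
  set g := S (B ηstar) - yd with hg
  have hgη : ∀ η : H, ⟪g, η⟫ = ⟪B ηstar, B η⟫ + ⟪y₀, Φ η⟫ - ⟪yd, η⟫ := by
    intro η
    rw [hg, inner_sub_left, ← hS]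
  have hkey : ∀ (η : H) (t : ℝ),
      0 ≤ t * ⟪g, η⟫ + t^2/2 * ‖B η‖^2 + ε₀ * (‖ηstar + t • η‖ - ‖ηstar‖) := by
    intro η t
    have h := hmin (ηstar + t • η)
    rw [hJ, hJ] at h
    have hnorm : ‖B (ηstar + t • η)‖^2
        = ‖B ηstar‖^2 + 2*t*⟪B ηstar, B η⟫ + t^2 * ‖B η‖^2 := by
      rw [map_add, map_smul]
      rw [@norm_add_sq_real K _ _ (B ηstar) (t • B η)]
      rw [real_inner_smul_right, norm_smul]
      simp only [Real.norm_eq_abs, mul_pow, sq_abs]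
      ring
    rw [hnorm] at h
    simp only [map_add, map_smul, inner_add_right, inner_smul_right] at h
    rw [hgη η]
    linarith [h]
  have hNpos : 0 < ‖ηstar‖ := norm_pos_iff.mpr hne
  -- part 1
  have part1 : ⟪g, ηstar⟫ = -ε₀ * ‖ηstar‖ := by
    have hscale : ∀ t : ℝ, -1 ≤ t → ‖ηstar + t • ηstar‖ - ‖ηstar‖ = t * ‖ηstar‖ := by
      intro t ht
      have he : ηstar + t • ηstar = (1 + t) • ηstar := by
        rw [add_smul, one_smul]
      rw [he, norm_smul, Real.norm_eq_abs, abs_of_nonneg (by linarith)]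
      ring
    have hub : ⟪g, ηstar⟫ + ε₀ * ‖ηstar‖ ≤ 0 := by
      apply aux_le _ (‖B ηstar‖^2/2)
      intro s hs0 hs1
      have h := hkey ηstar (-s)
      rw [hscale (-s) (by linarith)] at h
      have h2 : s * (⟪g, ηstar⟫ + ε₀ * ‖ηstar‖) ≤ s * (s * (‖B ηstar‖^2/2)) := by
        nlinarith [h]
      exact le_of_mul_le_mul_left h2 hs0
    have hlb : 0 ≤ ⟪g, ηstar⟫ + ε₀ * ‖ηstar‖ := by
      by_contra h'
      push_neg at h'
      set x := ⟪g, ηstar⟫ + ε₀ * ‖ηstar‖ with hx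
      rcases le_or_gt (‖B ηstar‖^2) 0 with hk | hk
      · have h := hkey ηstar 1
        rw [hscale 1 (by norm_num)] at h
        nlinarith
      · set t := min 1 (-x / ‖B ηstar‖^2) with htdef
        have ht0 : 0 < t := lt_min (by norm_num) (div_pos (by linarith) hk)
        have h := hkey ηstar t
        rw [hscale t (by linarith)] at h
        have h2 : 0 ≤ t * x + t^2/2 * ‖B ηstar‖^2 := by
          rw [hx]; nlinarith [h]
        have ht1 : t * ‖B ηstar‖^2 ≤ -x := by
          have hm := min_le_right 1 (-x / ‖B ηstar‖^2)
          calc t * ‖B ηstar‖^2 ≤ (-x / ‖B ηstar‖^2) * ‖B ηstar‖^2 :=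
                mul_le_mul_of_nonneg_right hm hk.le
            _ = -x := div_mul_cancel₀ _ hk.ne'
        nlinarith [mul_le_mul_of_nonneg_left ht1 ht0.le, mul_pos ht0 (neg_pos.mpr h')]
    linarith
  refine ⟨part1, ?_⟩
  -- lower bound on ‖g‖
  have hlow : ε₀ ≤ ‖g‖ := by
    have habs : |⟪g, ηstar⟫| ≤ ‖g‖ * ‖ηstar‖ := abs_real_inner_le_norm g ηstar
    rw [part1] at habs
    have hm : ε₀ * ‖ηstar‖ ≤ ‖g‖ * ‖ηstar‖ := by
      rw [abs_of_nonpos (by nlinarith)] at habs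
      linarith [habs]
    exact le_of_mul_le_mul_right hm hNpos
  -- upper bound: ⟪g, η⟫ ≤ ε₀‖η‖ for all η
  have hub : ∀ η : H, ⟪g, η⟫ ≤ ε₀ * ‖η‖ := by
    intro η
    have hle : ⟪g, η⟫ - ε₀ * ‖η‖ ≤ 0 := by
      apply aux_le _ (‖B η‖^2/2)
      intro s hs0 hs1
      have h := hkey η (-s)
      have htri : ‖ηstar + (-s) • η‖ - ‖ηstar‖ ≤ s * ‖η‖ := by
        have hts := norm_add_le ηstar ((-s) • η)
        rw [norm_smul, Real.norm_eq_abs, abs_of_neg (by linarith : -s < 0)] at hts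
        linarith
      have hε : ε₀ * (‖ηstar + (-s) • η‖ - ‖ηstar‖) ≤ ε₀ * (s * ‖η‖) :=
        mul_le_mul_of_nonneg_left htri hε₀.le
      have h2 : s * (⟪g, η⟫ - ε₀ * ‖η‖) ≤ s * (s * (‖B η‖^2/2)) := by
        linarith [h, hε]
      exact le_of_mul_le_mul_left h2 hs0
    linarith
  have hgg := hub g
  rw [real_inner_self_eq_norm_sq] at hgg
  have hgpos : 0 < ‖g‖ := lt_of_lt_of_le hε₀ hlow
  have : ‖g‖ ≤ ε₀ := by nlinarith
  linarith
end

section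
/- With the duality identity ⟨u, Bη⟩ + ⟨y₀, Φη⟩ = ⟨S(u), η⟩, let u* = Bη* where η* ≠ 0 satisfies the Euler–Lagrange equation, so that ⟨S(u*) − y_d, η*⟩ = −ε₀‖η*‖. If ū ∈ K satisfies ‖S(ū) − y_d‖ ≤ ε₀, then ‖u*‖ ≤ ‖ū‖. That is, u* is the minimal-norm admissible control. -/
open scoped RealInnerProductSpace

theorem stmt_8 {H K : Type*} [NormedAddCommGroup H] [InnerProductSpace ℝ H]
    [NormedAddCommGroup K] [InnerProductSpace ℝ K]
    (B : H →L[ℝ] K) (Φ : H →L[ℝ] H)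
    (y₀ yd : H) (ε₀ : ℝ) (hε₀ : 0 < ε₀)
    (ηstar : H) (hne : ηstar ≠ 0)
    (hEL : ∀ η : H, ⟪B ηstar, B η⟫ + ⟪y₀, Φ η⟫ - ⟪yd, η⟫ + ε₀ * ⟪ηstar, η⟫ / ‖ηstar‖ = 0)
    (S : K → H) (hS : ∀ (u : K) (η : H), ⟪u, B η⟫ + ⟪y₀, Φ η⟫ = ⟪S u, η⟫)
    (hEq : ⟪S (B ηstar) - yd, ηstar⟫ = -ε₀ * ‖ηstar‖)
    (ubar : K) (hadm : ‖S ubar - yd‖ ≤ ε₀) :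
    ‖B ηstar‖ ≤ ‖ubar‖ := by
  have h1 := hS ubar ηstar
  have h2 := hS (B ηstar) ηstar
  have hlb : ⟪S ubar - yd, ηstar⟫ ≥ -ε₀ * ‖ηstar‖ := by
    have := abs_real_inner_le_norm (S ubar - yd) ηstar
    have h := neg_abs_le (⟪S ubar - yd, ηstar⟫ : ℝ)
    nlinarith [norm_nonneg ηstar, mul_le_mul_of_nonneg_right hadm (norm_nonneg ηstar)]
  have hkey : ⟪(B ηstar : K), B ηstar⟫ ≤ ⟪ubar, B ηstar⟫ := by
    have e1 : ⟪S ubar - yd, ηstar⟫ = ⟪S ubar, ηstar⟫ - ⟪yd, ηstar⟫ := by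
      rw [inner_sub_left]
    have e2 : ⟪S (B ηstar) - yd, ηstar⟫ = ⟪S (B ηstar), ηstar⟫ - ⟪yd, ηstar⟫ := by
      rw [inner_sub_left]
    linarith [hEq ▸ hlb, hlb]
  have hn : ⟪(B ηstar : K), B ηstar⟫ = ‖B ηstar‖ ^ 2 := real_inner_self_eq_norm_sq _
  have hub : ⟪ubar, (B ηstar : K)⟫ ≤ ‖ubar‖ * ‖B ηstar‖ := real_inner_le_norm _ _
  rcases eq_or_ne (B ηstar) 0 with h0 | h0
  · simp [h0]
  · have hpos : 0 < ‖B ηstar‖ := norm_pos_iff.mpr h0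
    nlinarith
end

section
/- Let D = {η ∈ H : J(β,η) ≤ 0} where J(β,η) = (1/2)⟨β, G(η)⟩ − ‖Φη‖ − ⟨y_d, η⟩ + ε₀‖η‖ and the observability inequality ‖Φη‖² ≤ C⟨β, G(η)⟩ holds. Suppose y_d decomposes as y_d = S(ŷ₀) + y₁ with ŷ₀ ∈ H, ‖y₁‖ < ε₀/2 and ⟨y_d, η⟩ = ⟨ŷ₀, Φη⟩ + ⟨y₁, η⟩ for all η. Then every η ∈ D satisfies ‖η‖ ≤ (C/ε₀)(1 + ‖ŷ₀‖)², i.e., D is contained in the closed ball of radius δ₀ = (C/ε₀)(1 + ‖ŷ₀‖)². -/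
open scoped RealInnerProductSpace

theorem stmt_11 {H : Type*} [NormedAddCommGroup H] [InnerProductSpace ℝ H]
    (Φ : H →L[ℝ] H) (P : H → ℝ) (hP0 : ∀ η : H, 0 ≤ P η)
    (C : ℝ) (hC : 0 < C) (hobs : ∀ η : H, ‖Φ η‖^2 ≤ C * P η)
    (yd yhat₀ y₁ : H) (ε₀ : ℝ) (hε₀ : 0 < ε₀)
    (hy₁ : ‖y₁‖ < ε₀ / 2)
    (hdecomp : ∀ η : H, ⟪yd, η⟫ = ⟪yhat₀, Φ η⟫ + ⟪y₁, η⟫)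
    (J : H → ℝ)
    (hJ : ∀ η : H, J η = (1/2) * P η - ‖Φ η‖ - ⟪yd, η⟫ + ε₀ * ‖η‖) :
    ∀ η : H, J η ≤ 0 → ‖η‖ ≤ (C / ε₀) * (1 + ‖yhat₀‖)^2 := by
  intro η hη
  have hJη := hJ η
  have hobsη := hobs η
  have hd := hdecomp η
  have hin1 : ⟪yhat₀, Φ η⟫ ≤ ‖yhat₀‖ * ‖Φ η‖ := real_inner_le_norm _ _
  have ht0 : (0:ℝ) ≤ ‖Φ η‖ := norm_nonneg _
  set t := ‖Φ η‖ with ht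
  set a := 1 + ‖yhat₀‖ with ha
  have ha1 : 1 ≤ a := by rw [ha]; linarith [norm_nonneg yhat₀]
  have h1 : ⟪yhat₀, Φ η⟫ ≤ ‖yhat₀‖ * t := hin1
  have h2 : ⟪y₁, η⟫ ≤ (ε₀ / 2) * ‖η‖ := by
    calc ⟪y₁, η⟫ ≤ ‖y₁‖ * ‖η‖ := real_inner_le_norm _ _
    _ ≤ (ε₀ / 2) * ‖η‖ := by
        apply mul_le_mul_of_nonneg_right hy₁.le (norm_nonneg _)
  have hP : t^2 / (2*C) ≤ (1/2) * P η := by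
    rw [div_le_iff₀ (by linarith)]
    nlinarith [hobsη]
  clear_value t a
  have key : (ε₀ / 2) * ‖η‖ ≤ a * t - t^2 / (2*C) := by
    nlinarith [hη, hJη, h1, h2, hP]
  have quad : a * t - t^2 / (2*C) ≤ (C/2) * a^2 := by
    have h2C : (0:ℝ) < 2*C := by linarith
    have hu : t^2 = (t^2/(2*C))*(2*C) := (div_mul_cancel₀ _ h2C.ne').symm
    nlinarith [sq_nonneg (t - C*a), hu]
  have : (ε₀ / 2) * ‖η‖ ≤ (C/2) * a^2 := le_trans key quad
  rw [div_mul_eq_mul_div, le_div_iff₀ hε₀]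
  nlinarith [this]
end
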